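/- Let n ≥ 1, d ≥ 1, α > 0 and p ∈ (0,1]. Let S be an n×n real symmetric matrix and let v, v★, u, u★ be n×d real matrices. Set z = v − α·S·u and z★ = v★ − α·S·u★, and assume S·z★ = 0. Define û = u + (p/α)·S·z. Then p·‖û − u★‖_F² + (1−p)·‖u − u★‖_F² = ‖u − u★‖_F² − p·‖û − u‖_F² + (2p²/α)·⟪û − u★, S·(z − z★)⟫_F. -/

import Mathlib

noncomputable section

/-- An `n × d` real matrix, viewed as `n` rows in Euclidean space `ℝ^d`. -/
abbrev Mat (n d : ℕ) := Fin n → EuclideanSpace ℝ (Fin d)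

/-- Multiplication of an `n × n` matrix with an `n × d` matrix. -/
def matMul {n d : ℕ} (S : Matrix (Fin n) (Fin n) ℝ) (x : Mat n d) : Mat n d :=
  fun i => ∑ j, S i j • x j

/-- Squared Frobenius norm of an `n × d` matrix. -/
def fro2 {n d : ℕ} (x : Mat n d) : ℝ := ∑ i, ‖x i‖ ^ 2

/-- Frobenius inner product of two `n × d` matrices. -/
def frInner {n d : ℕ} (x y : Mat n d) : ℝ := ∑ i, inner ℝ (x i) (y i)

lemma fro2_add {n d : ℕ} (x y : Mat n d) :
    fro2 (x + y) = fro2 x + 2 * frInner x y + fro2 y := by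
  simp only [fro2, frInner, Pi.add_apply]
  rw [Finset.mul_sum, ← Finset.sum_add_distrib, ← Finset.sum_add_distrib]
  refine Finset.sum_congr rfl fun i _ => ?_
  have := norm_add_sq_real (x i) (y i)
  linarith

lemma frInner_add_left {n d : ℕ} (x y w : Mat n d) :
    frInner (x + y) w = frInner x w + frInner y w := by
  simp only [frInner, Pi.add_apply, inner_add_left, Finset.sum_add_distrib]

lemma frInner_self {n d : ℕ} (x : Mat n d) : frInner x x = fro2 x := by
  simp only [frInner, fro2, real_inner_self_eq_norm_sq]

lemma frInner_smul_right {n d : ℕ} (c : ℝ) (x y : Mat n d) :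
    frInner x (c • y) = c * frInner x y := by
  simp only [frInner, Pi.smul_apply, real_inner_smul_right, Finset.mul_sum]

/-- **Dual expectation identity** from the proof of Lemma 2: the expectation over
the Bernoulli(p) coin `θ` of `‖u⁺(θ) − u★‖_F²`. -/
theorem dual_expectation_identity
    (n d : ℕ) (hn : 1 ≤ n) (hd : 1 ≤ d)
    (α p : ℝ) (hα0 : 0 < α) (hp0 : 0 < p) (hp1 : p ≤ 1)
    (S : Matrix (Fin n) (Fin n) ℝ) (hSsymm : S.IsSymm)
    (v vstar u ustar : Mat n d)
    (z zstar : Mat n d)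
    (hz : z = v - α • matMul S u)
    (hzstar : zstar = vstar - α • matMul S ustar)
    (hSz : matMul S zstar = 0)
    (uhat : Mat n d) (huhat : uhat = u + (p / α) • matMul S z) :
    p * fro2 (uhat - ustar) + (1 - p) * fro2 (u - ustar)
      = fro2 (u - ustar) - p * fro2 (uhat - u)
        + 2 * p ^ 2 / α * frInner (uhat - ustar) (matMul S (z - zstar)) := by
  have hαne : (α : ℝ) ≠ 0 := ne_of_gt hα0
  have hpne : p ≠ 0 := ne_of_gt hp0
  -- matMul S (z - zstar) = matMul S z
  have hM : matMul S (z - zstar) = matMul S z := by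
    funext i
    have h0 : (∑ j, S i j • zstar j) = 0 := congrFun hSz i
    simp only [matMul, Pi.sub_apply, smul_sub, Finset.sum_sub_distrib, h0, sub_zero]
  have hC : uhat - u = (p / α) • matMul S z := by
    rw [huhat]; abel
  have hMz : matMul S z = (α / p) • (uhat - u) := by
    rw [hC, smul_smul, div_mul_div_comm, mul_comm α p, div_self (by positivity), one_smul]
  have hA : uhat - ustar = (u - ustar) + (uhat - u) := by abel
  set B := u - ustar
  set C := uhat - u
  have h1 : fro2 (uhat - ustar) = fro2 B + 2 * frInner B C + fro2 C := by
    rw [hA, fro2_add]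
  have h2 : frInner (uhat - ustar) (matMul S (z - zstar))
      = (α / p) * (frInner B C + fro2 C) := by
    rw [hM, hMz, frInner_smul_right, hA, frInner_add_left, frInner_self]
  rw [h1, h2]
  field_simp
  ring
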